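/- Let n ≥ 2 be an integer and let P be a convex integer polygon containing no point of nℤ². Suppose that P contains a segment with ℓ(P) + 1 integer points lying on a line x₁ = c, where c is an integer with 0 ≤ c ≤ n (i.e., there are integers a and c with 0 ≤ c ≤ n such that the segment from (c, a) to (c, a + ℓ(P)) is contained in P). Then P is contained in the slab −n + 1 ≤ x₁ ≤ 2n − 1. -/

import Mathlib

/-!
Suppose some vertex `v` of `P` has `v.1 ≥ 2n` (the case `v.1 ≤ -n` is its mirror image under
`x₁ ↦ n - x₁`, which preserves `nℤ²`). By convexity `P` contains the triangle spanned by `v` and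
the vertical segment with `ℓ + 1` lattice points at `x₁ = c`. An elementary case analysis on the
shape of this triangle shows that it contains either a point of `nℤ²`, on one of the lines
`x₁ = n` or `x₁ = 2n`, or two lattice points `z` and `z + (ℓ + 1) d` with `d ≠ 0`. The latter puts
`ℓ + 2` lattice points of `P` on one line, contradicting `ℓ(P) = ℓ`.
-/

open Set

/-- The point of `ℝ²` corresponding to an integer point. -/
def intPt (p : ℤ × ℤ) : ℝ × ℝ := ((p.1 : ℝ), (p.2 : ℝ))

/-- A convex integer polygon: the convex hull of a finite set of integer points,
with nonempty interior. -/
def IsConvexIntegerPolygon (P : Set (ℝ × ℝ)) : Prop :=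
  ∃ V : Finset (ℤ × ℤ), P = convexHull ℝ (intPt '' ↑V) ∧ (interior P).Nonempty

/-- `P` contains no point of the lattice `nℤ² = (nℤ) × (nℤ)`. -/
def FreeOfLattice (n : ℕ) (P : Set (ℝ × ℝ)) : Prop :=
  ∀ u v : ℤ, intPt ((n : ℤ) * u, (n : ℤ) * v) ∉ P

/-- A line in the plane. -/
def IsLine (L : Set (ℝ × ℝ)) : Prop :=
  ∃ a b c : ℝ, ¬(a = 0 ∧ b = 0) ∧ L = {x : ℝ × ℝ | a * x.1 + b * x.2 = c}

/-- The set of integer points of the plane. -/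
def intPts : Set (ℝ × ℝ) := {x : ℝ × ℝ | ∃ p : ℤ × ℤ, x = intPt p}

/-- The lattice diameter of `P` equals `ℓ`: the maximum over all lines `L` of
`|P ∩ ℤ² ∩ L| - 1` is `ℓ`. -/
def LatticeDiamIs (P : Set (ℝ × ℝ)) (ℓ : ℕ) : Prop :=
  (∃ L, IsLine L ∧ (P ∩ intPts ∩ L).ncard = ℓ + 1) ∧
  ∀ L, IsLine L → (P ∩ intPts ∩ L).ncard ≤ ℓ + 1

open Bornology

/-- The lattice point `(x, y)` lies in the triangle with vertices `(c, a)`, `(c, a + l)` and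
`(c + D, a + e)`, where `D > 0`; the inequalities are multiplied through by `D`. -/
def InTriangle (c a l D e x y : ℤ) : Prop :=
  c ≤ x ∧ x ≤ c + D ∧ e * (x - c) ≤ (y - a) * D ∧ (y - a) * D ≤ e * (x - c) + l * (c + D - x)

lemma exists_mul_eq_add_of_pos (L M : ℤ) (hM : 0 < M) : ∃ j r, 0 ≤ r ∧ r < M ∧ j * M = L + r :=
  ⟨-(-L / M), -L % M, Int.emod_nonneg _ hM.ne', Int.emod_lt_of_pos _ hM,
    by linarith [Int.mul_ediv_add_emod (-L) M]⟩

section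
variable {n l c D e a : ℤ}

lemma inTriangle_left_edge (hD : 0 ≤ D) {y : ℤ} (hy₀ : a ≤ y) (hy₁ : y ≤ a + l) :
    InTriangle c a l D e c y :=
  ⟨le_rfl, by omega, by nlinarith, by nlinarith⟩

lemma inTriangle_apex (hD : 0 ≤ D) : InTriangle c a l D e (c + D) (a + e) :=
  ⟨by omega, le_rfl, by nlinarith, by nlinarith⟩

lemma exists_scaled_inTriangle_of_width_le (hn : 0 < n) (hD : 0 < D) (hDl : D ≤ l) (hcn : c ≤ n)
    (hcD : 2 * n ≤ c + D) : ∃ j, InTriangle c a l D e n (n * j) := by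
  obtain ⟨j, r, hr₀, hr, hj⟩ :=
    exists_mul_eq_add_of_pos (a * D + e * (n - c)) (n * D) (by positivity)
  refine ⟨j, hcn, by omega, by linear_combination hr₀ - hj, ?_⟩
  have h₁ : 0 ≤ (l - D) * (c + D - n) := mul_nonneg (by omega) (by omega)
  have h₂ : 0 ≤ D * (c + D - 2 * n) := mul_nonneg (by omega) (by omega)
  linear_combination hr + hj + h₁ + h₂

lemma exists_pair_inTriangle_of_rem_le {j R : ℤ} (hl : 0 ≤ l) (hlD : l < D)
    (hj : j * D = e * (l + 1) + R) (hR₀ : 0 ≤ R) (hR : R ≤ l * (D - (l + 1))) :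
    ∃ x y p q, 0 < p ∧ InTriangle c a l D e x y ∧
      InTriangle c a l D e (x + (l + 1) * p) (y + (l + 1) * q) := by
  have hq : a + j % (l + 1) + (l + 1) * (j / (l + 1)) = a + j := by
    linarith [Int.mul_ediv_add_emod j (l + 1)]
  refine ⟨c, a + j % (l + 1), 1, j / (l + 1), one_pos,
    inTriangle_left_edge (by omega) (by linarith [Int.emod_nonneg j (by omega : l + 1 ≠ 0)])
      (by linarith [Int.emod_lt_of_pos j (by omega : 0 < l + 1)]), ?_⟩
  rw [hq]
  exact ⟨by omega, by omega, by linear_combination hR₀ - hj, by linear_combination hR + hj⟩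

lemma eq_or_eq_of_lt_rem {j R : ℤ} (hl : 1 ≤ l) (hlD : l < D) (hRD : R < D)
    (hj : j * D = e * (l + 1) + R) (hR : l * (D - (l + 1)) < R) :
    (D = l + 2 ∧ R = l + 1) ∨ (l = 1 ∧ 4 ≤ D ∧ R = D - 1) := by
  have hD : l + 2 ≤ D := by
    by_contra h
    obtain rfl : D = l + 1 := by omega
    have hR' : R = (j - e) * (l + 1) := by linear_combination -hj
    rcases le_or_gt (j - e) 0 with h | h <;> nlinarith
  rcases hD.eq_or_lt with rfl | hD
  · exact .inl ⟨by nlinarith, by nlinarith⟩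
  · right
    obtain rfl : l = 1 := by nlinarith
    omega

lemma exists_pair_inTriangle_of_two_mul_eq {κ : ℤ} (hD : 4 ≤ D) (he : 2 * e = κ * D + 1) :
    ∃ x y p q, 0 < p ∧ InTriangle c a 1 D e x y ∧
      InTriangle c a 1 D e (x + (1 + 1) * p) (y + (1 + 1) * q) := by
  refine ⟨c + (D - 4), a + e - 2 * κ, 2, κ, two_pos,
    ⟨by omega, by omega, by linear_combination -2 * he, by linear_combination 2 * he⟩, ?_⟩
  convert inTriangle_apex (l := 1) (c := c) (a := a) (e := e) (by omega : 0 ≤ D) using 1 <;> ring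

lemma inTriangle_of_eq_sub_one {κ x t : ℤ} (hx₀ : c ≤ x) (hx₁ : x ≤ c + (l + 2))
    (ht₀ : -(x - c) ≤ t * (l + 2)) (ht₁ : t * (l + 2) ≤ l * (l + 2) - (l + 1) * (x - c)) :
    InTriangle c a l (l + 2) (κ * (l + 2) - 1) x (a + κ * (x - c) + t) :=
  ⟨hx₀, hx₁, by linear_combination ht₀, by linear_combination ht₁⟩

/-- With `n * m = a + κ * (n - c) + r`, the disjuncts say that `(n, n * m)`, `(2 * n, n * (m + κ))`
and `(2 * n, n * (m + κ - 1))` respectively lie in the triangle of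
`exists_scaled_inTriangle_of_eq_sub_one`. -/
lemma rem_le_or_rem_le_or_le {r : ℤ} (hcn : c ≤ n)
    (hcD : 2 * n ≤ c + (l + 2)) (hr₀ : 0 ≤ r) (hrn : r < n) :
    r * (l + 2) ≤ l * (l + 2) - (l + 1) * (n - c) ∨
      r * (l + 2) ≤ l * (l + 2) - (l + 1) * (2 * n - c) ∨ (n - r) * (l + 2) ≤ 2 * n - c := by
  by_contra! h
  obtain ⟨h₁, h₂, h₃⟩ := h
  rcases le_or_gt (l + 2) n with hs | hs
  · obtain ⟨rfl, rfl⟩ : n = c ∧ l = n - 2 := by omega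
    have : n - 2 < r := lt_of_mul_lt_mul_right (by linarith) (by omega : (0:ℤ) ≤ n)
    obtain rfl : r = n - 1 := by omega
    nlinarith
  rcases le_or_gt r (n - 2) with hr | hr
  · nlinarith [mul_nonneg (show 0 ≤ l + 1 by omega) (show 0 ≤ c + (l + 2) - 2 * n by omega)]
  · obtain rfl : r = n - 1 := by omega
    nlinarith [mul_nonneg (show 0 ≤ l + 1 by omega) (show 0 ≤ l + 1 - (2 * n - c) by omega)]

lemma exists_scaled_inTriangle_of_eq_sub_one {κ : ℤ} (hn : 0 < n) (hcn : c ≤ n)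
    (hcD : 2 * n ≤ c + (l + 2)) (he : e = κ * (l + 2) - 1) :
    ∃ u w, InTriangle c a l (l + 2) e (n * u) (n * w) := by
  subst he
  obtain ⟨m, r, hr₀, hrn, hm⟩ := exists_mul_eq_add_of_pos (a + κ * (n - c)) n (by omega)
  rcases rem_le_or_rem_le_or_le hcn hcD hr₀ hrn with h | h | h
  · refine ⟨1, m, ?_⟩
    rw [mul_one, show n * m = a + κ * (n - c) + r by linear_combination hm]
    exact inTriangle_of_eq_sub_one hcn (by omega) (by nlinarith) h
  · refine ⟨2, m + κ, ?_⟩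
    rw [show n * (m + κ) = a + κ * (n * 2 - c) + r by linear_combination hm]
    exact inTriangle_of_eq_sub_one (by omega) (by omega) (by nlinarith) (by linear_combination h)
  · refine ⟨2, m + κ - 1, ?_⟩
    rw [show n * (m + κ - 1) = a + κ * (n * 2 - c) + (r - n) by linear_combination hm]
    refine inTriangle_of_eq_sub_one (by omega) (by omega) (by linear_combination h) ?_
    nlinarith [mul_nonneg (show 0 ≤ l + 1 by omega) (show 0 ≤ c + (l + 2) - 2 * n by omega)]

theorem exists_scaled_or_pair_inTriangle (hn : 0 < n) (hl : 0 ≤ l) (hcn : c ≤ n)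
    (hcD : 2 * n ≤ c + D) :
    (∃ u w, InTriangle c a l D e (n * u) (n * w)) ∨
      ∃ x y p q, 0 < p ∧ InTriangle c a l D e x y ∧
        InTriangle c a l D e (x + (l + 1) * p) (y + (l + 1) * q) := by
  have hD : 0 < D := by omega
  obtain rfl | hl := hl.eq_or_lt
  · exact .inr ⟨c, a, D, e, hD, inTriangle_left_edge hD.le le_rfl (by simp),
      by simpa using inTriangle_apex (l := 0) (c := c) (a := a) (e := e) hD.le⟩
  by_cases hDl : D ≤ l
  · obtain ⟨j, hj⟩ := exists_scaled_inTriangle_of_width_le (e := e) (a := a) hn hD hDl hcn hcD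
    exact .inl ⟨1, j, by simpa using hj⟩
  -- `R / D` is the distance from the bottom of the slice of the triangle at `x = c + (l + 1)`
  -- up to the next integer.
  obtain ⟨j, R, hR₀, hRD, hj⟩ := exists_mul_eq_add_of_pos (e * (l + 1)) D hD
  by_cases hR : R ≤ l * (D - (l + 1))
  · exact .inr (exists_pair_inTriangle_of_rem_le hl.le (by omega) hj hR₀ hR)
  rcases eq_or_eq_of_lt_rem hl (by omega) hRD hj (by omega) with ⟨rfl, rfl⟩ | ⟨rfl, hD4, rfl⟩
  · exact .inl (exists_scaled_inTriangle_of_eq_sub_one (κ := e + 1 - j) hn hcn hcD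
      (by linear_combination hj))
  · exact .inr (exists_pair_inTriangle_of_two_mul_eq (κ := j - 1) hD4 (by linear_combination -hj))

end

lemma isometry_intPt : Isometry intPt :=
  Real.isometry_intCast.prodMap Real.isometry_intCast

lemma intPt_add (z w : ℤ × ℤ) : intPt (z + w) = intPt z + intPt w := by
  simp [intPt]

lemma intPt_zsmul (t : ℤ) (z : ℤ × ℤ) : intPt (t • z) = (t : ℝ) • intPt z := by
  simp [intPt]

lemma Bornology.IsBounded.finite_inter_intPts {P : Set (ℝ × ℝ)} (hP : IsBounded P) :
    (P ∩ intPts).Finite := by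
  have hpre : (intPt ⁻¹' P).Finite :=
    (Metric.isCompact_of_isClosed_isBounded (isClosed_discrete _)
      (isometry_intPt.antilipschitz.isBounded_preimage hP)).finite_of_discrete
  refine (hpre.image intPt).subset ?_
  rintro _ ⟨hx, p, rfl⟩
  exact ⟨p, hx, rfl⟩

lemma LatticeDiamIs.intPt_add_smul_notMem {P : Set (ℝ × ℝ)} {ℓ : ℕ} (hdiam : LatticeDiamIs P ℓ)
    (hconv : Convex ℝ P) (hbdd : IsBounded P) {z d : ℤ × ℤ} (hd : d ≠ 0) (hz : intPt z ∈ P) :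
    intPt (z + ((ℓ : ℤ) + 1) • d) ∉ P := by
  intro hzd
  set L : Set (ℝ × ℝ) := {x | (d.2 : ℝ) * x.1 + -(d.1 : ℝ) * x.2 =
    (d.2 : ℝ) * (intPt z).1 + -(d.1 : ℝ) * (intPt z).2}
  have hL : IsLine L := ⟨_, _, _, fun h => hd (by simpa [Prod.ext_iff, and_comm] using h), rfl⟩
  have hsub : (fun t : ℤ => intPt (z + t • d)) '' Icc 0 ((ℓ : ℤ) + 1) ⊆ P ∩ intPts ∩ L := by
    rintro _ ⟨t, ⟨ht₀, ht₁⟩, rfl⟩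
    refine ⟨⟨?_, _, rfl⟩, ?_⟩
    · have hℓ : (0 : ℝ) < (ℓ : ℝ) + 1 := by positivity
      have := hconv.add_smul_mem hz (by rwa [← intPt_add])
        (t := (t : ℝ) / ((ℓ : ℝ) + 1)) ⟨by positivity, (div_le_one hℓ).2 (by exact_mod_cast ht₁)⟩
      convert this using 1
      dsimp only
      rw [intPt_add, intPt_zsmul, intPt_zsmul, smul_smul]
      congr 2
      push_cast
      field_simp
    · simp only [L, intPt, mem_ofPred_eq, Prod.fst_add, Prod.snd_add, Prod.smul_fst,
        Prod.smul_snd, smul_eq_mul]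
      push_cast
      ring
  have hinj : Function.Injective fun t : ℤ => intPt (z + t • d) :=
    isometry_intPt.injective.comp ((add_right_injective z).comp (smul_left_injective ℤ hd))
  have hcard := Set.ncard_le_ncard hsub (hbdd.finite_inter_intPts.subset inter_subset_left)
  rw [Set.ncard_image_of_injective _ hinj, ← Finset.coe_Icc, Set.ncard_coe_finset,
    Int.card_Icc] at hcard
  have := hdiam.2 L hL
  omega

lemma intPt_mem_of_inTriangle {P : Set (ℝ × ℝ)} (hconv : Convex ℝ P) {l c D e a x y : ℤ}
    (hl : 0 ≤ l) (hD : 0 < D) (h₀ : intPt (c, a) ∈ P) (h₁ : intPt (c, a + l) ∈ P)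
    (h₂ : intPt (c + D, a + e) ∈ P) (h : InTriangle c a l D e x y) : intPt (x, y) ∈ P := by
  obtain ⟨hx₀, hx₁, hy₀, hy₁⟩ := h
  have hedge : ∀ β : ℝ, 0 ≤ β → β ≤ l → ((c : ℝ), a + β) ∈ P := by
    intro β hβ₀ hβ₁
    apply hconv.segment_subset h₀ h₁
    rw [intPt, intPt, ← Prod.image_mk_segment_right, segment_eq_Icc (by simpa using hl)]
    exact ⟨a + β, ⟨by linarith, by push_cast; linarith⟩, rfl⟩
  obtain rfl | hx := hx₁.eq_or_lt
  · obtain rfl : y = a + e := by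
      have : (y - a) * D = e * D := by nlinarith
      linarith [mul_right_cancel₀ hD.ne' this]
    exact h₂
  have hDR : (0 : ℝ) < D := by exact_mod_cast hD
  have hs : (0 : ℝ) < D - (x - c) := by
    have : (x : ℝ) < c + D := by exact_mod_cast hx
    linarith
  have hy₀' : (e : ℝ) * (x - c) ≤ (y - a) * D := by exact_mod_cast hy₀
  have hy₁' : ((y : ℝ) - a) * D ≤ e * (x - c) + l * (c + D - x) := by exact_mod_cast hy₁
  set σ : ℝ := (x - c) / D
  set β : ℝ := ((y - a) * D - e * (x - c)) / (D - (x - c))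
  have hu := hedge β (div_nonneg (by linarith) hs.le) ((div_le_iff₀ hs).2 (by linarith))
  have hσ₀ : 0 ≤ σ := div_nonneg (by exact_mod_cast sub_nonneg.2 hx₀) hDR.le
  have hσ₁ : σ ≤ 1 := (div_le_one hDR).2 (by linarith)
  convert hconv hu h₂ (sub_nonneg.2 hσ₁) hσ₀ (by ring) using 1
  simp only [intPt, σ, β, Prod.smul_mk, Prod.mk_add_mk, smul_eq_mul]
  push_cast
  ext <;> field_simp <;> ring

lemma convex_reflect_fst_preimage {P : Set (ℝ × ℝ)} (hconv : Convex ℝ P) (m : ℝ) :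
    Convex ℝ {x : ℝ × ℝ | (m - x.1, x.2) ∈ P} := by
  intro x hx y hy s t hs ht hst
  have := hconv (x := (m - x.1, x.2)) (y := (m - y.1, y.2)) hx hy hs ht hst
  show (m - (s • x + t • y).1, (s • x + t • y).2) ∈ P
  convert this using 1
  ext
  · simp only [Prod.fst_add, Prod.smul_fst, smul_eq_mul]
    linear_combination -m * hst
  · simp

lemma exists_scaled_or_add_smul_of_le_fst {P : Set (ℝ × ℝ)} (hconv : Convex ℝ P) {n l c a : ℤ}
    (hn : 0 < n) (hl : 0 ≤ l) (hcn : c ≤ n) (h₀ : intPt (c, a) ∈ P)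
    (h₁ : intPt (c, a + l) ∈ P) {v : ℤ × ℤ} (hv : intPt v ∈ P) (hvn : 2 * n ≤ v.1) :
    (∃ u w, intPt (n * u, n * w) ∈ P) ∨
      ∃ z d, d ≠ 0 ∧ intPt z ∈ P ∧ intPt (z + (l + 1) • d) ∈ P := by
  have hT {x y : ℤ} : InTriangle c a l (v.1 - c) (v.2 - a) x y → intPt (x, y) ∈ P :=
    intPt_mem_of_inTriangle hconv hl (by omega) h₀ h₁ (by simpa using hv)
  rcases exists_scaled_or_pair_inTriangle (e := v.2 - a) (a := a) hn hl hcn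
    (by omega : 2 * n ≤ c + (v.1 - c)) with ⟨u, w, h⟩ | ⟨x, y, p, q, hp, h, h'⟩
  · exact .inl ⟨u, w, hT h⟩
  · exact .inr ⟨(x, y), (p, q), by simp [hp.ne'], hT h, by simpa using hT h'⟩

/-- Reflect in the line `x₁ = n / 2`, which preserves `nℤ²`. -/
lemma exists_scaled_or_add_smul_of_fst_le {P : Set (ℝ × ℝ)} (hconv : Convex ℝ P) {n l c a : ℤ}
    (hn : 0 < n) (hl : 0 ≤ l) (hc₀ : 0 ≤ c) (h₀ : intPt (c, a) ∈ P)
    (h₁ : intPt (c, a + l) ∈ P) {v : ℤ × ℤ} (hv : intPt v ∈ P) (hvn : v.1 ≤ -n) :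
    (∃ u w, intPt (n * u, n * w) ∈ P) ∨
      ∃ z d, d ≠ 0 ∧ intPt z ∈ P ∧ intPt (z + (l + 1) • d) ∈ P := by
  set P' := {x : ℝ × ℝ | ((n : ℝ) - x.1, x.2) ∈ P}
  have hP' (z : ℤ × ℤ) : intPt z ∈ P' ↔ intPt (n - z.1, z.2) ∈ P := by simp [P', intPt]
  rcases exists_scaled_or_add_smul_of_le_fst (convex_reflect_fst_preimage hconv n) hn hl
    (c := n - c) (by omega) ((hP' _).2 (by simpa using h₀))
    ((hP' _).2 (by simpa using h₁)) (v := (n - v.1, v.2)) ((hP' _).2 (by simpa using hv))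
    (by simp; omega) with ⟨u, w, h⟩ | ⟨z, d, hd, hz, hzd⟩
  · exact .inl ⟨1 - u, w, by simpa [mul_sub] using (hP' _).1 h⟩
  · refine .inr ⟨(n - z.1, z.2), (-d.1, d.2), by simpa [Prod.ext_iff] using hd, (hP' _).1 hz, ?_⟩
    convert (hP' _).1 hzd using 2
    ext <;> simp
    ring

/-- Lemma: if a convex integer polygon `P` free of points of `nℤ²` contains a segment with
`ℓ(P) + 1` integer points on a line `x₁ = c` with `0 ≤ c ≤ n`, then `P` lies in the slab
`-n + 1 ≤ x₁ ≤ 2n - 1`. -/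
theorem stmt15 (n : ℕ) (hn : 2 ≤ n) (P : Set (ℝ × ℝ)) (hP : IsConvexIntegerPolygon P)
    (hfree : FreeOfLattice n P)
    (ℓ : ℕ) (hdiam : LatticeDiamIs P ℓ)
    (a c : ℤ) (hc0 : 0 ≤ c) (hcn : c ≤ (n : ℤ))
    (hseg : segment ℝ ((c : ℝ), (a : ℝ)) ((c : ℝ), ((a + (ℓ : ℤ) : ℤ) : ℝ)) ⊆ P) :
    ∀ x ∈ P, (-(n : ℝ) + 1) ≤ x.1 ∧ x.1 ≤ 2 * (n : ℝ) - 1 := by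
  obtain ⟨V, rfl, -⟩ := hP
  have hconv := convex_convexHull ℝ (intPt '' (V : Set (ℤ × ℤ)))
  have hbdd : IsBounded (convexHull ℝ (intPt '' (V : Set (ℤ × ℤ)))) :=
    ((V.finite_toSet.image intPt).isCompact_convexHull ℝ).isBounded
  have h₀ : intPt (c, a) ∈ convexHull ℝ (intPt '' V) := hseg (left_mem_segment ℝ _ _)
  have h₁ : intPt (c, a + ℓ) ∈ convexHull ℝ (intPt '' V) := hseg (right_mem_segment ℝ _ _)
  have hV : ∀ v ∈ V, -(n : ℤ) < v.1 ∧ v.1 < 2 * n := by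
    intro v hv
    have hvP : intPt v ∈ convexHull ℝ (intPt '' V) :=
      subset_convexHull ℝ _ (mem_image_of_mem _ hv)
    by_contra! hfar
    obtain ⟨u, w, h⟩ | ⟨z, d, hd, hz, hzd⟩ := if hvn : v.1 ≤ -n then
        exists_scaled_or_add_smul_of_fst_le hconv (by omega) (by omega) hc0 h₀ h₁ hvP hvn
      else exists_scaled_or_add_smul_of_le_fst hconv (by omega) (by omega) hcn h₀ h₁ hvP
        (hfar (by omega))
    · exact hfree u w h
    · exact hdiam.intPt_add_smul_notMem hconv hbdd hd hz hzd
  intro x hx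
  obtain ⟨_, ⟨v, hv, rfl⟩, hvx⟩ := ((LinearMap.fst ℝ ℝ ℝ).concaveOn convex_univ)
    |>.exists_le_of_mem_convexHull (subset_univ _) hx
  obtain ⟨_, ⟨w, hw, rfl⟩, hxw⟩ := ((LinearMap.fst ℝ ℝ ℝ).convexOn convex_univ)
    |>.exists_ge_of_mem_convexHull (subset_univ _) hx
  have hv' : (-(n : ℤ) + 1 : ℤ) ≤ v.1 := by linarith [(hV v hv).1]
  have hw' : w.1 ≤ (2 * n - 1 : ℤ) := by linarith [(hV w hw).2]
  constructor
  · calc (-(n : ℝ) + 1) ≤ v.1 := by exact_mod_cast hv'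
      _ ≤ x.1 := hvx
  · calc x.1 ≤ w.1 := hxw
      _ ≤ 2 * (n : ℝ) - 1 := by exact_mod_cast hw'
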